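/- Let L = ℤ^μ be the root lattice of a symmetric generalized Cartan matrix A = (a_{ij}) associated to a connected graph (a_{ii} = 2, a_{ij} = a_{ji} ≤ 0 for i ≠ j), with bilinear form I(α_i, α_j) = a_{ij}. Let K = {λ ∈ L⁺∖{0} : λ has connected support and I(λ, α_i) ≤ 0 for all i}. Then for any λ ∈ K and any w in the Weyl group W, w(λ) ∈ L⁺, i.e., the set of positive imaginary roots Δ⁺_im = W(K) is contained in L⁺ = Σᵢ ℤ≥0 α_i. -/

import Mathlib

/-!
Write `w = w' r_x` with `ℓ(w') < ℓ(w)`. Then `w λ = w' λ - I(λ, α_x) • w' α_x`, so by induction on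
the length it suffices that `w' α_x ≥ 0` whenever `ℓ(w' r_x) ≥ ℓ(w')`. This is the positivity of
roots, proved by induction on length as for the geometric representation of a Coxeter group
(Humphreys, *Reflection Groups and Coxeter Groups*, §5.4): factor `w = v u` with `u` a word in two
generators `r_s, r_t` and `v` without right descents at `s, t`; this reduces the claim to rank two.
There, an alternating word `… r_s r_t` of length `k` sends `α_s` to a combination of `α_s, α_t`
with coefficients the Chebyshev values `S_k(-a_st), S_{k-1}(-a_st)`. These are nonnegative for
every `k` when `a_st ≤ -2`, and for `a_st ∈ {0, -1}` they stay nonnegative exactly as long as the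
commutation or braid relation does not shorten the word.
-/

open CoxeterSystem (alternatingWord alternatingWord_succ alternatingWord_succ'
  length_alternatingWord)

lemma eq_alternatingWord_of_isChain {ι : Type*} {s t : ι} {m : List ι}
    (hm : ∀ x ∈ m, x = s ∨ x = t) (hchain : (m ++ [s]).IsChain (· ≠ ·)) :
    m = alternatingWord s t m.length := by
  induction m using List.reverseRecOn generalizing s t with
  | nil => rfl
  | append_singleton m x ih =>
    obtain ⟨hchain', -, hlast⟩ := List.isChain_append.1 hchain
    have hxt : x = t := (hm x (by simp)).resolve_left (hlast x (by simp) s (by simp))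
    subst hxt
    rw [List.length_append, List.length_singleton, alternatingWord_succ, List.concat_eq_append,
      ← ih (fun y hy => (hm y (by simp [hy])).symm) hchain']

lemma exists_alternatingWord_eq_append {ι : Type*} (s t : ι) (j n : ℕ) :
    ∃ p : List ι, p.length = j ∧ alternatingWord s t (j + n) = p ++ alternatingWord s t n := by
  induction j with
  | zero => exact ⟨[], rfl, by simp⟩
  | succ j ih =>
    obtain ⟨p, hp, he⟩ := ih
    refine ⟨(if Even (j + n) then t else s) :: p, by simp [hp], ?_⟩
    rw [Nat.add_right_comm, alternatingWord_succ', he, List.cons_append]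

section WordLength

variable {M ι : Type*} [Monoid M] (g : ι → M)

def wordProd (l : List ι) : M := (l.map g).prod

/-- Only meaningful on products of generators: elsewhere it is `sInf ∅ = 0`. -/
noncomputable def wordLength (w : M) : ℕ :=
  sInf {n | ∃ l : List ι, l.length = n ∧ wordProd g l = w}

@[simp] lemma wordProd_nil : wordProd g [] = 1 := rfl

@[simp] lemma wordProd_cons (i : ι) (l : List ι) : wordProd g (i :: l) = g i * wordProd g l :=
  List.prod_cons

@[simp] lemma wordProd_append (l l' : List ι) :
    wordProd g (l ++ l') = wordProd g l * wordProd g l' := by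
  simp [wordProd]

lemma wordProd_singleton (i : ι) : wordProd g [i] = g i := by simp

lemma wordLength_le (l : List ι) : wordLength g (wordProd g l) ≤ l.length :=
  Nat.sInf_le ⟨l, rfl, rfl⟩

lemma exists_reduced_word (l : List ι) :
    ∃ l' : List ι, wordProd g l' = wordProd g l ∧ l'.length = wordLength g (wordProd g l) := by
  obtain ⟨l', hlen, hl'⟩ := Nat.sInf_mem (s := {n | ∃ l' : List ι, l'.length = n ∧
    wordProd g l' = wordProd g l}) ⟨l.length, l, rfl, rfl⟩
  exact ⟨l', hl', hlen⟩

lemma wordLength_mul_le (l l' : List ι) :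
    wordLength g (wordProd g l * wordProd g l') ≤
      wordLength g (wordProd g l) + wordLength g (wordProd g l') := by
  obtain ⟨r, hr, hrlen⟩ := exists_reduced_word g l
  obtain ⟨r', hr', hr'len⟩ := exists_reduced_word g l'
  simpa [← hr, ← hr', hrlen, hr'len] using wordLength_le g (r ++ r')

lemma wordProd_eq_one_of_wordLength_eq_zero {l : List ι} (h : wordLength g (wordProd g l) = 0) :
    wordProd g l = 1 := by
  obtain ⟨l', hl', hlen⟩ := exists_reduced_word g l
  rw [← hl', List.eq_nil_of_length_eq_zero (hlen.trans h), wordProd_nil]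

variable {g}

lemma wordProd_mul_mul_self (hg : ∀ i, g i * g i = 1) (l : List ι) (i : ι) :
    wordProd g l * g i * g i = wordProd g l := by
  rw [mul_assoc, hg, mul_one]

lemma exists_wordLength_mul_lt (hg : ∀ i, g i * g i = 1) {l : List ι}
    (h : 0 < wordLength g (wordProd g l)) :
    ∃ x, wordLength g (wordProd g l * g x) < wordLength g (wordProd g l) := by
  obtain ⟨l', hl', hlen⟩ := exists_reduced_word g l
  obtain ⟨l₀, x, rfl⟩ := (List.eq_nil_or_concat l').resolve_left (by rintro rfl; simp_all)
  refine ⟨x, ?_⟩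
  rw [← hl', List.concat_eq_append] at hlen ⊢
  rw [← hlen, wordProd_append, wordProd_singleton, wordProd_mul_mul_self hg, List.length_append]
  exact Nat.lt_succ_of_le (wordLength_le g l₀)

lemma wordLength_add_two_le_of_not_isChain (hg : ∀ i, g i * g i = 1) {l : List ι}
    (h : ¬ l.IsChain (· ≠ ·)) : wordLength g (wordProd g l) + 2 ≤ l.length := by
  obtain ⟨x, l₁, l₂, rfl⟩ : ∃ x l₁ l₂, l = l₁ ++ x :: x :: l₂ := by
    simpa [List.isChain_iff_forall_rel_of_append_cons_cons] using h
  have hcancel : wordProd g (l₁ ++ x :: x :: l₂) = wordProd g (l₁ ++ l₂) := by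
    simp [← mul_assoc, hg]
  have := wordLength_le g (l₁ ++ l₂)
  rw [hcancel]
  simp only [List.length_append, List.length_cons] at this ⊢
  omega

lemma wordLength_wordProd_alternatingWord_mul_lt (hg : ∀ i, g i * g i = 1) {s t : ι} {n : ℕ}
    (hn : 0 < n) (hbraid : wordProd g (alternatingWord s t n) = wordProd g (alternatingWord t s n))
    {k : ℕ} (hk : n ≤ k) :
    wordLength g (wordProd g (alternatingWord s t k) * g s) < k := by
  obtain ⟨n, rfl⟩ := Nat.exists_eq_succ_of_ne_zero hn.ne'
  obtain ⟨p, hp, hsplit⟩ := exists_alternatingWord_eq_append s t (k - (n + 1)) (n + 1)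
  rw [Nat.sub_add_cancel hk] at hsplit
  have hshort : wordProd g (alternatingWord s t k) * g s =
      wordProd g (p ++ alternatingWord s t n) := by
    rw [hsplit, wordProd_append, wordProd_append, hbraid, alternatingWord_succ,
      List.concat_eq_append, wordProd_append, wordProd_singleton, mul_assoc, mul_assoc, hg,
      mul_one]
  have := wordLength_le g (p ++ alternatingWord s t n)
  rw [hshort]
  simp only [List.length_append, length_alternatingWord, hp] at this
  omega

lemma exists_parabolic_factorization (hg : ∀ i, g i * g i = 1) (s t : ι) (l : List ι) :
    ∃ lv m : List ι, (∀ x ∈ m, x = s ∨ x = t) ∧ wordProd g l = wordProd g lv * wordProd g m ∧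
      wordLength g (wordProd g lv) + m.length ≤ wordLength g (wordProd g l) ∧
      wordLength g (wordProd g lv) ≤ wordLength g (wordProd g lv * g s) ∧
      wordLength g (wordProd g lv) ≤ wordLength g (wordProd g lv * g t) := by
  induction hn : wordLength g (wordProd g l) using Nat.strong_induction_on generalizing l with
  | _ n ih =>
  by_cases hdesc : ∃ x, (x = s ∨ x = t) ∧ wordLength g (wordProd g l * g x) < n
  · obtain ⟨x, hx, hlt⟩ := hdesc
    obtain ⟨lv, m, hm, hfac, hlen, hvs, hvt⟩ :=
      ih _ hlt (l ++ [x]) (by rw [wordProd_append, wordProd_singleton])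
    refine ⟨lv, m ++ [x], ?_, ?_, ?_, hvs, hvt⟩
    · simpa [or_imp, forall_and] using ⟨hm, hx⟩
    · rw [wordProd_append, wordProd_singleton, ← mul_assoc, ← hfac, wordProd_append,
        wordProd_singleton, wordProd_mul_mul_self hg]
    · simp only [List.length_append, List.length_singleton]
      omega
  · simp only [not_exists, not_and, not_lt] at hdesc
    exact ⟨l, [], by simp, by simp, by simp [hn], hn ▸ hdesc s (.inl rfl),
      hn ▸ hdesc t (.inr rfl)⟩

end WordLength

lemma wordProd_apply_eq_foldr {ι R N : Type*} [Semiring R] [AddCommMonoid N] [Module R N]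
    (f : ι → Module.End R N) (l : List ι) (v : N) :
    wordProd f l v = l.foldr (fun i => f i) v := by
  induction l with
  | nil => rfl
  | cons i l ih => rw [wordProd_cons, Module.End.mul_apply, ih, List.foldr_cons]

lemma Polynomial.Chebyshev.S_eval_sub_one_nonneg_and_le {R : Type*} [CommRing R] [LinearOrder R]
    [IsStrictOrderedRing R] {x : R} (hx : 2 ≤ x) (n : ℕ) :
    0 ≤ (S R (n - 1)).eval x ∧ (S R (n - 1)).eval x ≤ (S R n).eval x := by
  induction n with
  | zero => simp
  | succ n ih =>
    obtain ⟨h0, hle⟩ := ih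
    push_cast
    rw [add_sub_cancel_right, S_add_one, eval_sub, eval_mul, eval_X]
    constructor <;> nlinarith

structure Matrix.IsSymmGCM {ι : Type*} (A : Matrix ι ι ℤ) : Prop where
  isSymm : A.IsSymm
  diag : ∀ i, A i i = 2
  off_diag_nonpos : ∀ i j, i ≠ j → A i j ≤ 0

section SimpleReflection

open Matrix Polynomial

variable {ι : Type*} [Fintype ι] [DecidableEq ι]

/-- `r_i v = v - I(v, α_i) α_i`, where `I(v, α_i) = (v ᵥ* A) i`. -/
def simpleReflection (A : Matrix ι ι ℤ) (i : ι) : Module.End ℤ (ι → ℤ) :=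
  LinearMap.id - (LinearMap.proj i ∘ₗ A.vecMulLinear).smulRight (Pi.single i 1)

variable {A : Matrix ι ι ℤ}

lemma simpleReflection_apply (i : ι) (v : ι → ℤ) :
    simpleReflection A i v = v - (v ᵥ* A) i • Pi.single i 1 := rfl

lemma vecMul_simpleReflection_apply (i j : ι) (v : ι → ℤ) :
    (simpleReflection A i v ᵥ* A) j = (v ᵥ* A) j - (v ᵥ* A) i * A i j := by
  rw [simpleReflection_apply, sub_vecMul, smul_vecMul, single_one_vecMul]
  rfl

lemma simpleReflection_mul_self (hA : ∀ i, A i i = 2) (i : ι) :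
    simpleReflection A i * simpleReflection A i = 1 := by
  refine LinearMap.ext fun v => ?_
  rw [Module.End.mul_apply, simpleReflection_apply _ (simpleReflection A i v),
    vecMul_simpleReflection_apply, hA, simpleReflection_apply, Module.End.one_apply]
  module

lemma simpleReflection_apply_smul_add_smul {i : ι} (hA : A i i = 2) (c d : ℤ) (j : ι) :
    simpleReflection A i (c • Pi.single i 1 + d • Pi.single j 1) =
      (-c - A j i * d) • Pi.single i 1 + d • Pi.single j 1 := by
  rw [simpleReflection_apply, add_vecMul, smul_vecMul, smul_vecMul, single_one_vecMul,
    single_one_vecMul]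
  simp only [Pi.add_apply, Pi.smul_apply, row_apply, smul_eq_mul, hA]
  module

lemma simpleReflection_mul_comm {s t : ι} (hst : A s t = 0) (hts : A t s = 0) :
    simpleReflection A s * simpleReflection A t = simpleReflection A t * simpleReflection A s := by
  refine LinearMap.ext fun v => ?_
  simp only [Module.End.mul_apply]
  rw [simpleReflection_apply _ (simpleReflection A t v), vecMul_simpleReflection_apply,
    simpleReflection_apply _ (simpleReflection A s v), vecMul_simpleReflection_apply,
    simpleReflection_apply, simpleReflection_apply, hst, hts]
  module

lemma simpleReflection_braid_apply {s t : ι} (hs : A s s = 2) (hst : A s t = -1)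
    (hts : A t s = -1) (v : ι → ℤ) :
    simpleReflection A s (simpleReflection A t (simpleReflection A s v)) =
      v - ((v ᵥ* A) s + (v ᵥ* A) t) • (Pi.single s 1 + Pi.single t 1) := by
  rw [simpleReflection_apply _ (simpleReflection A t _), vecMul_simpleReflection_apply,
    vecMul_simpleReflection_apply, vecMul_simpleReflection_apply, simpleReflection_apply t,
    vecMul_simpleReflection_apply, simpleReflection_apply, hs, hst, hts]
  module

lemma simpleReflection_braid (hA : A.IsSymmGCM) {s t : ι} (hst : A s t = -1) :
    simpleReflection A s * simpleReflection A t * simpleReflection A s =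
      simpleReflection A t * simpleReflection A s * simpleReflection A t := by
  have hts : A t s = -1 := by rw [hA.isSymm.apply s t, hst]
  refine LinearMap.ext fun v => ?_
  simp only [Module.End.mul_apply]
  rw [simpleReflection_braid_apply (hA.diag s) hst hts,
    simpleReflection_braid_apply (hA.diag t) hts hst]
  module

lemma wordProd_alternatingWord_apply_single (hA : A.IsSymmGCM) (s t : ι) (k : ℕ) :
    wordProd (simpleReflection A) (alternatingWord s t k) (Pi.single s 1) =
      if Even k then
        (Chebyshev.S ℤ k).eval (-A s t) • Pi.single s 1 +
          (Chebyshev.S ℤ (k - 1)).eval (-A s t) • Pi.single t 1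
      else
        (Chebyshev.S ℤ (k - 1)).eval (-A s t) • Pi.single s 1 +
          (Chebyshev.S ℤ k).eval (-A s t) • Pi.single t 1 := by
  induction k with
  | zero => simp [alternatingWord]
  | succ k ih =>
    have hS : (Chebyshev.S ℤ (k + 1)).eval (-A s t) =
        -(Chebyshev.S ℤ (k - 1)).eval (-A s t) - A s t * (Chebyshev.S ℤ k).eval (-A s t) := by
      rw [Chebyshev.S_add_one, eval_sub, eval_mul, eval_X]
      ring
    rw [alternatingWord_succ', wordProd_cons, Module.End.mul_apply, ih]
    by_cases hk : Even k
    · simp only [hk, if_true, Nat.even_add_one, not_true_eq_false, if_false, Nat.cast_add,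
        Nat.cast_one, add_sub_cancel_right]
      rw [add_comm, simpleReflection_apply_smul_add_smul (hA.diag t), add_comm, hS]
    · simp only [hk, if_false, Nat.even_add_one, not_false_eq_true, if_true, Nat.cast_add,
        Nat.cast_one, add_sub_cancel_right]
      rw [simpleReflection_apply_smul_add_smul (hA.diag s), hA.isSymm.apply s t, hS]

lemma exists_nonneg_wordProd_alternatingWord_apply_single (hA : A.IsSymmGCM) (s t : ι) {k : ℕ}
    (h₁ : 0 ≤ (Chebyshev.S ℤ (k - 1)).eval (-A s t)) (h₂ : 0 ≤ (Chebyshev.S ℤ k).eval (-A s t)) :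
    ∃ c d : ℤ, 0 ≤ c ∧ 0 ≤ d ∧ wordProd (simpleReflection A) (alternatingWord s t k)
      (Pi.single s 1) = c • Pi.single s 1 + d • Pi.single t 1 := by
  rw [wordProd_alternatingWord_apply_single hA]
  split_ifs
  exacts [⟨_, _, h₂, h₁, rfl⟩, ⟨_, _, h₁, h₂, rfl⟩]

lemma wordProd_apply_single_nonneg_or_wordLength_mul_lt (hA : A.IsSymmGCM) {s t : ι}
    (hst : s ≠ t) {m : List ι} (hm : ∀ x ∈ m, x = s ∨ x = t) :
    (∃ c d : ℤ, 0 ≤ c ∧ 0 ≤ d ∧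
      wordProd (simpleReflection A) m (Pi.single s 1) = c • Pi.single s 1 + d • Pi.single t 1) ∨
    wordLength (simpleReflection A) (wordProd (simpleReflection A) m * simpleReflection A s) <
      m.length := by
  have hinv := simpleReflection_mul_self hA.diag
  by_cases hchain : (m ++ [s]).IsChain (· ≠ ·)
  swap
  · right
    have := wordLength_add_two_le_of_not_isChain hinv hchain
    rw [wordProd_append, wordProd_singleton, List.length_append, List.length_singleton] at this
    omega
  obtain ⟨k, rfl⟩ : ∃ k, m = alternatingWord s t k := ⟨_, eq_alternatingWord_of_isChain hm hchain⟩
  rw [length_alternatingWord]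
  obtain h | h | h : A s t ≤ -2 ∨ A s t = -1 ∨ A s t = 0 := by
    have := hA.off_diag_nonpos s t hst
    omega
  · have := Chebyshev.S_eval_sub_one_nonneg_and_le (R := ℤ) (x := -A s t) (by omega) k
    exact .inl (exists_nonneg_wordProd_alternatingWord_apply_single hA s t this.1
      (this.1.trans this.2))
  · by_cases hk : k ≤ 2
    · left
      apply exists_nonneg_wordProd_alternatingWord_apply_single hA <;> interval_cases k <;> simp [h, Chebyshev.S_two]
    · right
      refine wordLength_wordProd_alternatingWord_mul_lt hinv (n := 3) (by norm_num) ?_ (by omega)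
      simpa [alternatingWord, ← mul_assoc] using (simpleReflection_braid hA h).symm
  · by_cases hk : k ≤ 1
    · left
      apply exists_nonneg_wordProd_alternatingWord_apply_single hA <;> interval_cases k <;> simp [h]
    · right
      refine wordLength_wordProd_alternatingWord_mul_lt hinv (n := 2) (by norm_num) ?_ (by omega)
      simpa [alternatingWord] using
        simpleReflection_mul_comm h (by rw [hA.isSymm.apply s t, h])

theorem wordProd_apply_single_nonneg (hA : A.IsSymmGCM) (l : List ι) (s : ι)
    (hl : wordLength (simpleReflection A) (wordProd (simpleReflection A) l) ≤
      wordLength (simpleReflection A) (wordProd (simpleReflection A) l * simpleReflection A s)) :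
    0 ≤ wordProd (simpleReflection A) l (Pi.single s 1) := by
  have hinv := simpleReflection_mul_self hA.diag
  induction hn : wordLength (simpleReflection A) (wordProd (simpleReflection A) l)
    using Nat.strong_induction_on generalizing l s with
  | _ n ih =>
  rcases Nat.eq_zero_or_pos n with rfl | hpos
  · rw [wordProd_eq_one_of_wordLength_eq_zero _ hn]
    exact Pi.single_nonneg.2 zero_le_one
  obtain ⟨x, hx⟩ := exists_wordLength_mul_lt hinv (hn ▸ hpos)
  have hxs : x ≠ s := by rintro rfl; omega
  obtain ⟨lv, m, hm, hfac, hlen, hvs, hvx⟩ := exists_parabolic_factorization hinv s x l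
  have hm_ne : m ≠ [] := by
    rintro rfl
    rw [wordProd_nil, mul_one] at hfac
    rw [← hfac] at hvx
    omega
  have hv : wordLength (simpleReflection A) (wordProd (simpleReflection A) lv) < n := by
    have := List.length_pos_of_ne_nil hm_ne
    omega
  rcases wordProd_apply_single_nonneg_or_wordLength_mul_lt hA hxs.symm hm with
    ⟨c, d, hc, hd, hmα⟩ | hshort
  · rw [hfac, Module.End.mul_apply, hmα, map_add, map_smul, map_smul]
    exact add_nonneg (smul_nonneg hc (ih _ hv lv s hvs rfl))
      (smul_nonneg hd (ih _ hv lv x hvx rfl))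
  · have := wordLength_mul_le (simpleReflection A) lv (m ++ [s])
    rw [wordProd_append, wordProd_singleton, ← mul_assoc, ← hfac] at this
    omega

theorem wordProd_apply_nonneg (hA : A.IsSymmGCM) {v : ι → ℤ} (hv : 0 ≤ v)
    (hvA : ∀ i, (v ᵥ* A) i ≤ 0) (l : List ι) : 0 ≤ wordProd (simpleReflection A) l v := by
  have hinv := simpleReflection_mul_self hA.diag
  induction hn : wordLength (simpleReflection A) (wordProd (simpleReflection A) l)
    using Nat.strong_induction_on generalizing l with
  | _ n ih =>
  rcases Nat.eq_zero_or_pos n with rfl | hpos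
  · rwa [wordProd_eq_one_of_wordLength_eq_zero _ hn]
  obtain ⟨x, hx⟩ := exists_wordLength_mul_lt hinv (hn ▸ hpos)
  have hw : wordProd (simpleReflection A) l =
      wordProd (simpleReflection A) (l ++ [x]) * simpleReflection A x := by
    rw [wordProd_append, wordProd_singleton, wordProd_mul_mul_self hinv]
  have hα := wordProd_apply_single_nonneg hA (l ++ [x]) x (by
    rw [← hw, wordProd_append, wordProd_singleton]
    omega)
  have hvx := ih _ (hn ▸ hx) (l ++ [x]) (by rw [wordProd_append, wordProd_singleton])
  rw [hw, Module.End.mul_apply, simpleReflection_apply, map_sub, map_smul, sub_eq_add_neg,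
    ← neg_smul]
  exact add_nonneg hvx (smul_nonneg (neg_nonneg.2 (hvA x)) hα)

end SimpleReflection

theorem stmt9_general (μ : ℕ) (A : Matrix (Fin μ) (Fin μ) ℤ)
    (hsymm : ∀ i j, A i j = A j i) (hdiag : ∀ i, A i i = 2)
    (hoff : ∀ i j, i ≠ j → A i j ≤ 0)
    (I : (Fin μ → ℤ) → (Fin μ → ℤ) → ℤ)
    (hI : ∀ x y, I x y = ∑ i, ∑ j, x i * A i j * y j)
    (r : Fin μ → (Fin μ → ℤ) → (Fin μ → ℤ))
    (hr : ∀ i lam, r i lam = lam - I lam (Pi.single i 1) • Pi.single i 1)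
    (lam : Fin μ → ℤ) (hlampos : ∀ i, 0 ≤ lam i)
    (hK : ∀ i, I lam (Pi.single i 1) ≤ 0) :
    ∀ l : List (Fin μ), ∀ i, 0 ≤ (l.foldr r lam) i := by
  have hA : A.IsSymmGCM := ⟨Matrix.IsSymm.ext fun i j => hsymm j i, hdiag, hoff⟩
  have hIα (v : Fin μ → ℤ) (i : Fin μ) : I v (Pi.single i 1) = Matrix.vecMul v A i := by
    simp [hI, Matrix.vecMul, dotProduct, Pi.single_apply]
  have hr' : r = fun i => ⇑(simpleReflection A i) := by
    funext i v
    rw [hr, hIα]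
    rfl
  intro l
  rw [hr', ← wordProd_apply_eq_foldr]
  exact wordProd_apply_nonneg hA hlampos (fun i => hIα lam i ▸ hK i) l

/-- For a symmetric generalized Cartan matrix `A` of a connected graph, with
root lattice `L = ℤ^μ`, bilinear form `I(x,y) = Σ x_i A_{ij} y_j`, simple reflections
`r_i(λ) = λ - I(λ, α_i)·α_i`, and
`K = {λ ∈ L⁺ ∖ {0} : connected support, I(λ, α_i) ≤ 0 ∀i}`:
every element of the Weyl group orbit `W(K)` (i.e. any iterated application of simple
reflections to `λ ∈ K`) lies in `L⁺ = Σ ℤ≥0 α_i`. -/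
theorem stmt9 (μ : ℕ) (A : Matrix (Fin μ) (Fin μ) ℤ)
    (hsymm : ∀ i j, A i j = A j i) (hdiag : ∀ i, A i i = 2)
    (hoff : ∀ i j, i ≠ j → A i j ≤ 0)
    (G : SimpleGraph (Fin μ))
    (hG : ∀ i j, G.Adj i j ↔ i ≠ j ∧ A i j < 0)
    (hconn : G.Connected)
    (I : (Fin μ → ℤ) → (Fin μ → ℤ) → ℤ)
    (hI : ∀ x y, I x y = ∑ i, ∑ j, x i * A i j * y j)
    (r : Fin μ → (Fin μ → ℤ) → (Fin μ → ℤ))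
    (hr : ∀ i lam, r i lam = lam - I lam (Pi.single i 1) • Pi.single i 1)
    (lam : Fin μ → ℤ) (hlam0 : lam ≠ 0) (hlampos : ∀ i, 0 ≤ lam i)
    (hsuppconn : (SimpleGraph.induce {i : Fin μ | lam i ≠ 0} G).Connected)
    (hK : ∀ i, I lam (Pi.single i 1) ≤ 0) :
    ∀ l : List (Fin μ), ∀ i, 0 ≤ (l.foldr r lam) i :=
  stmt9_general μ A hsymm hdiag hoff I hI r hr lam hlampos hK
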